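/- arXiv:2602.11732 — 6 statements merged into one kernel-verified Lean document; each statement's English description precedes it below -/
import Mathlib

section
/- There is an instance showing EEFX feasibility is not monotone in value: with 3 agents and 10 goods with additive values (for agent 1) [ε, 3−ε, 1+ε, 1+ε, 1+ε, 1−2ε, 1−2ε, 1−ε, 1−ε, 1] for small ε > 0 (e.g., ε = 1/100), the bundle X_1 = {g_1, g_2} of value 3 is EEFX feasible for agent 1, while the bundle X_2 = {g_3, g_4, g_5} of value 3+3ε > 3 is not EEFX feasible for agent 1. -/
open Finset

def IsAdditive {ι : Type*} [DecidableEq ι] (v : Finset ι → ℝ) : Prop :=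
  ∀ S : Finset ι, v S = ∑ g ∈ S, v {g}

def IsPartition {ι : Type*} [DecidableEq ι] (A : Finset ι) {k : ℕ} (P : Fin k → Finset ι) : Prop :=
  (∀ i j : Fin k, i ≠ j → Disjoint (P i) (P j)) ∧ Finset.univ.biUnion P = A

def EEFXFeasible {ι : Type*} [DecidableEq ι] (M : Finset ι) (v : Finset ι → ℝ) (n : ℕ)
    (B : Finset ι) : Prop :=
  ∃ P : Fin (n - 1) → Finset ι, IsPartition (M \ B) P ∧
    ∀ j, ∀ g ∈ P j, v (P j \ {g}) ≤ v B

def NonDegenerate {ι : Type*} [DecidableEq ι] (M : Finset ι) (v : Finset ι → ℝ) : Prop :=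
  ∀ S ⊆ M, ∀ T ⊆ M, S ≠ T → v S ≠ v T

noncomputable def strongShare {ι : Type*} [DecidableEq ι] (M : Finset ι) (v : Finset ι → ℝ)
    (n : ℕ) : ℝ :=
  sInf {x | ∃ S ⊆ M, v S = x ∧ ∀ T ⊆ M, x ≤ v T → EEFXFeasible M v n T}

noncomputable def MXS {ι : Type*} [DecidableEq ι] (M : Finset ι) (v : Finset ι → ℝ)
    (n : ℕ) : ℝ :=
  sInf {x | ∃ S ⊆ M, v S = x ∧ EEFXFeasible M v n S}

noncomputable def MMS {ι : Type*} [DecidableEq ι] (M : Finset ι) (v : Finset ι → ℝ)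
    (n : ℕ) : ℝ :=
  sSup {x | ∃ P : Fin n → Finset ι, IsPartition M P ∧ x = ⨅ j, v (P j)}

def ResidualSelfFeasible {ι : Type*} [DecidableEq ι] (M : Finset ι) (v : Finset ι → ℝ)
    (n : ℕ) (t : ℝ) : Prop :=
  ∀ k : ℕ, k < n → ∀ S : Fin k → Finset ι,
    (∀ j, S j ⊆ M) → (∀ i j : Fin k, i ≠ j → Disjoint (S i) (S j)) → (∀ j, v (S j) < t) →
    ∃ X : Fin (n - k) → Finset ι,
      IsPartition (M \ Finset.univ.biUnion S) X ∧ ∀ j, t ≤ v (X j)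

noncomputable def RMMS {ι : Type*} [DecidableEq ι] (M : Finset ι) (v : Finset ι → ℝ)
    (n : ℕ) : ℝ :=
  sSup {t | ResidualSelfFeasible M v n t}

noncomputable def w5 : Fin 10 → ℝ :=
  ![1/100, 3 - 1/100, 1 + 1/100, 1 + 1/100, 1 + 1/100,
    1 - 2/100, 1 - 2/100, 1 - 1/100, 1 - 1/100, 1]

noncomputable def v5 (S : Finset (Fin 10)) : ℝ := ∑ g ∈ S, w5 g

def nw5 : Fin 10 → ℕ := ![1, 299, 101, 101, 101, 98, 98, 99, 99, 100]

lemma w5_eq (g : Fin 10) : w5 g = (nw5 g : ℝ) / 100 := by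
  fin_cases g <;> norm_num [w5, nw5]

lemma v5_eq (S : Finset (Fin 10)) : v5 S = ((∑ g ∈ S, nw5 g : ℕ) : ℝ) / 100 := by
  unfold v5
  rw [Nat.cast_sum, Finset.sum_div]
  exact Finset.sum_congr rfl fun g _ => w5_eq g

lemma v5_le (S : Finset (Fin 10)) (m : ℕ) :
    v5 S ≤ (m : ℝ) / 100 ↔ (∑ g ∈ S, nw5 g) ≤ m := by
  rw [v5_eq, div_le_div_iff_of_pos_right (by norm_num : (0:ℝ) < 100)]
  exact_mod_cast Iff.rfl

def R5 : Finset (Fin 10) := {0, 1, 5, 6, 7, 8, 9}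

set_option maxRecDepth 10000 in
lemma key5 : ∀ S : Finset (Fin 10), S ⊆ R5 →
    (∃ g ∈ S, 303 < ∑ x ∈ S \ {g}, nw5 x) ∨
    (∃ g ∈ R5 \ S, 303 < ∑ x ∈ (R5 \ S) \ {g}, nw5 x) := by decide

theorem stmt5 :
    v5 {0, 1} = 3 ∧ v5 {2, 3, 4} = 3 + 3 * (1/100) ∧
    EEFXFeasible Finset.univ v5 3 {0, 1} ∧
    ¬ EEFXFeasible Finset.univ v5 3 {2, 3, 4} := by
  have h01 : v5 {0, 1} = 3 := by
    rw [v5_eq, show (∑ g ∈ ({0, 1} : Finset (Fin 10)), nw5 g) = 300 by decide]; norm_num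
  have h234 : v5 {2, 3, 4} = 3 + 3 * (1/100) := by
    rw [v5_eq, show (∑ g ∈ ({2, 3, 4} : Finset (Fin 10)), nw5 g) = 303 by decide]; norm_num
  refine ⟨h01, h234, ?_, ?_⟩
  · refine ⟨![{2, 3, 5, 6}, {4, 7, 8, 9}], ⟨?_, ?_⟩, ?_⟩
    · decide
    · decide
    · intro j g hg
      rw [h01, show (3:ℝ) = ((300:ℕ) : ℝ)/100 by norm_num, v5_le]
      fin_cases j <;> fin_cases hg <;> decide
  · rintro ⟨P, ⟨hdisj, hun⟩, hP⟩
    have hu2 : P 0 ∪ P 1 = R5 := by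
      have hR : Finset.univ \ {2, 3, 4} = R5 := by decide
      rw [← hR, ← hun]; ext x; simp [Fin.exists_fin_two]
    have hP1 : P 1 = R5 \ P 0 := by
      rw [← hu2, Finset.union_sdiff_cancel_left (hdisj 0 1 (by decide))]
    have hsub : P 0 ⊆ R5 := hu2 ▸ Finset.subset_union_left
    have hle : ∀ j, ∀ g ∈ P j, (∑ x ∈ P j \ {g}, nw5 x) ≤ 303 := by
      intro j g hg
      rw [← v5_le]
      calc v5 (P j \ {g}) ≤ v5 {2, 3, 4} := hP j g hg
        _ = ((303:ℕ) : ℝ)/100 := by rw [h234]; norm_num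
    rcases key5 (P 0) hsub with ⟨g, hg, hlt⟩ | ⟨g, hg, hlt⟩
    · exact absurd (hle 0 g hg) (by omega)
    · rw [← hP1] at hg hlt
      exact absurd (hle 1 g hg) (by omega)
end

section
/- For a monotone valuation v over a finite set M of items and any k ≥ 1, there exists an EFX partition of M into k bundles for v, i.e., a partition (P_1,…,P_k) with v(P_j) ≥ v(P_{j'} \ {g}) for all j, j' ∈ [k] and all g ∈ P_{j'}. -/
open Finset

/-!
Give each bundle the key (value, size), ordered lexicographically; sizes break ties because `v`
need not be strictly monotone. Weigh a key `x` by `2 ^ #{attained keys ≥ x}` and take an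
assignment of items to the `k` bundles of minimal total weight. If some bundle `P j` strongly
envies `P j' \ {g}`, moving `g` from `P j'` to `P j` replaces the keys of `P j` and `P j'` by two
keys strictly above the key of `P j`: the first because `v` is monotone and the bundle grows, the
second because of the envy. Each new weight is at most half the weight of `P j`, so the total
weight drops, a contradiction.
-/

theorem Finset.sum_lt_sum_of_lt_of_eq_off_pair {κ : Type*} [Fintype κ] [DecidableEq κ]
    {F G : κ → ℕ} {a b : κ} (hab : a ≠ b) (heq : ∀ i, i ≠ a → i ≠ b → G i = F i)
    (hlt : G a + G b < F a + F b) : ∑ i, G i < ∑ i, F i := by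
  have hb : b ∈ univ.erase a := mem_erase.2 ⟨hab.symm, mem_univ b⟩
  rw [← add_sum_erase _ F (mem_univ a), ← add_sum_erase _ F hb,
    ← add_sum_erase _ G (mem_univ a), ← add_sum_erase _ G hb,
    sum_congr rfl fun i hi => heq i (ne_of_mem_erase (mem_of_mem_erase hi)) (ne_of_mem_erase hi),
    ← add_assoc, ← add_assoc]
  exact Nat.add_lt_add_right hlt _

section Rank

variable {α : Type*} [Preorder α] [DecidableLE α]

def rankWeight (s : Finset α) (x : α) : ℕ := 2 ^ #{y ∈ s | x ≤ y}

theorem two_mul_rankWeight_le {s : Finset α} {a b : α} (ha : a ∈ s) (hab : a < b) :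
    2 * rankWeight s b ≤ rankWeight s a := by
  have hssub : {y ∈ s | b ≤ y} ⊂ {y ∈ s | a ≤ y} :=
    ssubset_iff_of_subset (monotone_filter_right s fun _ _ => hab.le.trans) |>.2
      ⟨a, mem_filter.2 ⟨ha, le_rfl⟩, fun h => hab.not_ge (mem_filter.1 h).2⟩
  rw [rankWeight, rankWeight, ← pow_succ']
  exact Nat.pow_le_pow_right two_pos (card_lt_card hssub)

theorem rankWeight_add_lt {s : Finset α} {a b c : α} (d : α) (ha : a ∈ s) (hab : a < b)
    (hac : a < c) : rankWeight s b + rankWeight s c < rankWeight s a + rankWeight s d := by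
  have := two_mul_rankWeight_le ha hab
  have := two_mul_rankWeight_le ha hac
  have : 0 < rankWeight s d := by unfold rankWeight; positivity
  omega

end Rank

section Assignment

variable {ι : Type*} [DecidableEq ι] {k : ℕ}

def bundles (M : Finset ι) (f : ι → Fin k) (i : Fin k) : Finset ι := {x ∈ M | f x = i}

theorem isPartition_bundles (M : Finset ι) (f : ι → Fin k) : IsPartition M (bundles M f) := by
  refine ⟨fun i j hij => disjoint_filter.2 fun x _ hi hj => hij (hi ▸ hj), ?_⟩
  ext x
  simp [bundles]

theorem bundles_update_of_ne {M : Finset ι} {f : ι → Fin k} {g : ι} {i j : Fin k}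
    (hij : i ≠ j) : bundles M (Function.update f g j) i = (bundles M f i).erase g := by
  ext x
  by_cases hx : x = g <;> simp [bundles, hx, hij.symm, Function.update_of_ne]

theorem bundles_update_self {M : Finset ι} {f : ι → Fin k} {g : ι} (hg : g ∈ M) (j : Fin k) :
    bundles M (Function.update f g j) j = insert g (bundles M f j) := by
  ext x
  by_cases hx : x = g <;> simp [bundles, hx, hg, Function.update_of_ne]

end Assignment

section Potential

variable {ι : Type*} [DecidableEq ι] {k : ℕ} (M : Finset ι) (v : Finset ι → ℝ)

def IsEFX (P : Fin k → Finset ι) : Prop :=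
  ∀ j j' : Fin k, ∀ g ∈ P j', v (P j' \ {g}) ≤ v (P j)

def bundleKey (S : Finset ι) : ℝ ×ₗ ℕ := toLex (v S, #S)

noncomputable def potential (f : ι → Fin k) : ℕ :=
  ∑ i, rankWeight (M.powerset.image (bundleKey v)) (bundleKey v (bundles M f i))

variable {M v}

theorem bundleKey_lt_insert (hmono : Monotone v) {S : Finset ι} {g : ι} (hg : g ∉ S) :
    bundleKey v S < bundleKey v (insert g S) :=
  Prod.Lex.toLex_lt_toLex'.2 ⟨hmono (subset_insert g S), fun _ => by
    simp [card_insert_of_notMem hg]⟩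

theorem potential_update_lt (hmono : Monotone v) {f : ι → Fin k} {g : ι} {j : Fin k}
    (hg : g ∈ M) (hj : f g ≠ j)
    (henvy : v (bundles M f j) < v ((bundles M f (f g)).erase g)) :
    potential M v (Function.update f g j) < potential M v f := by
  refine sum_lt_sum_of_lt_of_eq_off_pair hj.symm (fun i hij hig => ?_) ?_
  · rw [bundles_update_of_ne hij, erase_eq_of_notMem fun h => hig (mem_filter.1 h).2.symm]
  · have hgj : g ∉ bundles M f j := fun h => hj (mem_filter.1 h).2
    rw [bundles_update_self hg, bundles_update_of_ne hj]
    exact rankWeight_add_lt _ (mem_image_of_mem _ (mem_powerset.2 (filter_subset _ M)))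
      (bundleKey_lt_insert hmono hgj) (Prod.Lex.toLex_lt_toLex.2 (Or.inl henvy))

theorem isEFX_bundles_of_forall_potential_le (hmono : Monotone v) {f : ι → Fin k}
    (hmin : ∀ f' : ι → Fin k, potential M v f ≤ potential M v f') :
    IsEFX v (bundles M f) := by
  intro j j' g hg
  obtain ⟨hgM, rfl⟩ := mem_filter.1 hg
  by_contra! henvy
  rw [sdiff_singleton_eq_erase] at henvy
  rcases eq_or_ne (f g) j with rfl | hj
  · exact henvy.not_ge (hmono (erase_subset g _))
  · exact (hmin _).not_gt (potential_update_lt hmono hgM hj henvy)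

end Potential

theorem stmt6_general {ι : Type*} [DecidableEq ι] (M : Finset ι) (v : Finset ι → ℝ)
    (hmono : ∀ S T : Finset ι, S ⊆ T → v S ≤ v T)
    (k : ℕ) (hk : 1 ≤ k) :
    ∃ P : Fin k → Finset ι, IsPartition M P ∧
      ∀ j j' : Fin k, ∀ g ∈ P j', v (P j' \ {g}) ≤ v (P j) := by
  have : Nonempty (ι → Fin k) := ⟨fun _ => ⟨0, hk⟩⟩
  exact ⟨_, isPartition_bundles M _,
    isEFX_bundles_of_forall_potential_le hmono fun f' => Function.argmin_le (potential M v) f'⟩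

theorem stmt6 {ι : Type*} [DecidableEq ι] (M : Finset ι) (v : Finset ι → ℝ)
    (hmono : ∀ S T : Finset ι, S ⊆ T → v S ≤ v T) (hnorm : v ∅ = 0)
    (k : ℕ) (hk : 1 ≤ k) :
    ∃ P : Fin k → Finset ι, IsPartition M P ∧
      ∀ j j' : Fin k, ∀ g ∈ P j', v (P j' \ {g}) ≤ v (P j) :=
  stmt6_general M v hmono k hk
end

section
/- Let v be an additive non-degenerate valuation with strong EEFX share θ > 0, T the largest EEFX-infeasible bundle, and S_1,…,S_k pairwise disjoint bundles with v(S_j) < θ for all j. Let S = ∪_j S_j and R = T ∩ S. Then there exists a partition (Y_1,…,Y_k) of S such that R ⊆ Y_1, v(Y_1) < θ, and v(Y_j \ {g}) < θ for all j ∈ {2,…,k} and all g ∈ Y_j. -/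
open Finset

lemma vmono {ι : Type*} [DecidableEq ι] {v : Finset ι → ℝ} (hadd : IsAdditive v)
    (hnn : ∀ S : Finset ι, 0 ≤ v S) {A B : Finset ι} (h : A ⊆ B) : v A ≤ v B := by
  rw [hadd A, hadd B]
  exact Finset.sum_le_sum_of_subset_of_nonneg h (fun g _ _ => hnn {g})

lemma vunion {ι : Type*} [DecidableEq ι] {v : Finset ι → ℝ} (hadd : IsAdditive v)
    {A B : Finset ι} (h : Disjoint A B) : v (A ∪ B) = v A + v B := by
  rw [hadd (A ∪ B), hadd A, hadd B, Finset.sum_union h]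

lemma key {ι : Type*} [DecidableEq ι] (v : Finset ι → ℝ) (hadd : IsAdditive v)
    (hnn : ∀ S : Finset ι, 0 ≤ v S) (θ : ℝ) (hθ : 0 < θ) :
    ∀ k : ℕ, ∀ hk : 0 < k, ∀ R P : Finset ι, Disjoint R P → v R < θ →
      v R + v P < k * θ →
      ∃ Y : Fin k → Finset ι, IsPartition (R ∪ P) Y ∧ R ⊆ Y ⟨0, hk⟩ ∧
        v (Y ⟨0, hk⟩) < θ ∧ ∀ j, j ≠ (⟨0, hk⟩ : Fin k) → ∀ g ∈ Y j, v (Y j \ {g}) < θ := by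
  intro k
  induction k with
  | zero => intro hk; exact absurd hk (lt_irrefl 0)
  | succ k ih =>
    intro hk R P hdisj hR hsum
    by_cases hsmall : v R + v P < θ
    · refine ⟨fun j => if j = ⟨0, hk⟩ then R ∪ P else ∅, ⟨?_, ?_⟩, ?_, ?_, ?_⟩
      · intro i j hij
        by_cases hi : i = ⟨0, hk⟩ <;> by_cases hj : j = ⟨0, hk⟩ <;>
          simp_all
      · ext x
        simp only [mem_biUnion, mem_univ, true_and]
        constructor
        · rintro ⟨j, hj⟩
          by_cases h : j = ⟨0, hk⟩ <;> simp_all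
        · intro hx; exact ⟨⟨0, hk⟩, by simp [hx]⟩
      · simp
      · show v (if (⟨0, hk⟩ : Fin (k+1)) = ⟨0, hk⟩ then R ∪ P else ∅) < θ
        rw [if_pos rfl, vunion hadd hdisj]; exact hsmall
      · intro j hj g hg
        simp only [if_neg hj] at hg
        exact absurd hg (Finset.notMem_empty g)
    · push_neg at hsmall
      have hk0 : 0 < k := by
        rcases Nat.eq_zero_or_pos k with h | h
        · exfalso; rw [h] at hsum; simp at hsum; linarith
        · exact h
      have hB : ∃ B ⊆ P, (∀ g ∈ B, v (B \ {g}) < θ) ∧ v R + v (P \ B) < k * θ := by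
        by_cases hP : θ ≤ v P
        · obtain ⟨B, hBmem, hBmin⟩ := Finset.exists_min_image
            (P.powerset.filter fun B => θ ≤ v B) Finset.card ⟨P, by simp [hP]⟩
          simp only [Finset.mem_filter, Finset.mem_powerset] at hBmem
          refine ⟨B, hBmem.1, ?_, ?_⟩
          · intro g hg
            by_contra hcon
            push_neg at hcon
            have hmem : B \ {g} ∈ P.powerset.filter fun B => θ ≤ v B := by
              simp only [Finset.mem_filter, Finset.mem_powerset]
              exact ⟨(Finset.sdiff_subset).trans hBmem.1, hcon⟩
            have h1 := hBmin _ hmem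
            have hlt : (B \ {g}).card < B.card := by
              rw [Finset.sdiff_singleton_eq_erase]
              exact Finset.card_erase_lt_of_mem hg
            omega
          · have hsplit : v P = v B + v (P \ B) := by
              rw [← vunion hadd (Finset.disjoint_sdiff), Finset.union_sdiff_of_subset hBmem.1]
            have hcast : ((k : ℝ) + 1) * θ = k * θ + θ := by ring
            push_cast at hsum
            linarith [hBmem.2]
        · push_neg at hP
          refine ⟨P, le_refl P, ?_, ?_⟩
          · intro g hg
            exact lt_of_le_of_lt (vmono hadd hnn (Finset.sdiff_subset)) hP
          · rw [Finset.sdiff_self]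
            have hv0 : v (∅ : Finset ι) = 0 := by rw [hadd]; simp
            rw [hv0]
            have h1 : (1 : ℝ) ≤ (k : ℝ) := by exact_mod_cast hk0
            nlinarith
      obtain ⟨B, hBP, hBgood, hBrest⟩ := hB
      have hdisj' : Disjoint R (P \ B) := hdisj.mono_right Finset.sdiff_subset
      obtain ⟨Y', ⟨hYdisj, hYunion⟩, hY0, hY0v, hYrest⟩ := ih hk0 R (P \ B) hdisj' hR hBrest
      have hYsub : ∀ i, Y' i ⊆ R ∪ (P \ B) := fun i =>
        hYunion ▸ Finset.subset_biUnion_of_mem Y' (Finset.mem_univ i)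
      have hBdisj : ∀ i, Disjoint B (Y' i) := by
        intro i
        refine Finset.disjoint_left.mpr fun g hgB hgY => ?_
        rcases Finset.mem_union.mp (hYsub i hgY) with h | h
        · exact (Finset.disjoint_left.mp hdisj h) (hBP hgB)
        · exact (Finset.mem_sdiff.mp h).2 hgB
      have h0cast : (⟨0, hk⟩ : Fin (k + 1)) = Fin.castSucc ⟨0, hk0⟩ := rfl
      have h0ne : (⟨0, hk⟩ : Fin (k + 1)) ≠ Fin.last k := by
        intro h
        have := congrArg Fin.val h
        simp [Fin.last] at this
        omega
      refine ⟨Fin.snoc Y' B, ⟨?_, ?_⟩, ?_, ?_, ?_⟩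
      · intro i j hij
        rcases Fin.eq_castSucc_or_eq_last i with ⟨i', rfl⟩ | rfl <;>
          rcases Fin.eq_castSucc_or_eq_last j with ⟨j', rfl⟩ | rfl <;>
          simp only [Fin.snoc_last, Fin.snoc_castSucc]
        · refine hYdisj i' j' fun h => hij (by rw [h])
        · exact (hBdisj i').symm
        · exact hBdisj j'
        · exact absurd rfl hij
      · ext x
        simp only [mem_biUnion, mem_univ, true_and, mem_union]
        constructor
        · rintro ⟨j, hj⟩
          rcases Fin.eq_castSucc_or_eq_last j with ⟨j', rfl⟩ | rfl
          · rw [Fin.snoc_castSucc] at hj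
            rcases Finset.mem_union.mp (hYsub j' hj) with h | h
            · exact Or.inl h
            · exact Or.inr (Finset.mem_sdiff.mp h).1
          · rw [Fin.snoc_last] at hj
            exact Or.inr (hBP hj)
        · intro hx
          rcases hx with hx | hx
          · exact ⟨Fin.castSucc ⟨0, hk0⟩, by rw [Fin.snoc_castSucc]; exact hY0 hx⟩
          · by_cases hxB : x ∈ B
            · exact ⟨Fin.last k, by rw [Fin.snoc_last]; exact hxB⟩
            · have : x ∈ Finset.univ.biUnion Y' := by
                rw [hYunion]
                exact Finset.mem_union_right _ (Finset.mem_sdiff.mpr ⟨hx, hxB⟩)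
              obtain ⟨j, _, hj⟩ := Finset.mem_biUnion.mp this
              exact ⟨Fin.castSucc j, by rw [Fin.snoc_castSucc]; exact hj⟩
      · rw [h0cast, Fin.snoc_castSucc]; exact hY0
      · rw [h0cast, Fin.snoc_castSucc]; exact hY0v
      · intro j hj g hg
        rcases Fin.eq_castSucc_or_eq_last j with ⟨j', rfl⟩ | rfl
        · rw [Fin.snoc_castSucc] at hg ⊢
          refine hYrest j' (fun h => hj ?_) g hg
          rw [h0cast, h]
        · rw [Fin.snoc_last] at hg ⊢
          exact hBgood g hg

lemma vT_lt {ι : Type*} [DecidableEq ι] (M : Finset ι) (v : Finset ι → ℝ) (n : ℕ)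
    (hθ : 0 < strongShare M v n)
    (T : Finset ι) (hT : T ⊆ M) (hTinf : ¬ EEFXFeasible M v n T) :
    v T < strongShare M v n := by
  set A := {x | ∃ S ⊆ M, v S = x ∧ ∀ T ⊆ M, x ≤ v T → EEFXFeasible M v n T} with hA
  have hne : A.Nonempty := by
    by_contra h
    rw [Set.not_nonempty_iff_eq_empty] at h
    rw [strongShare, ← hA, h, Real.sInf_empty] at hθ
    exact lt_irrefl _ hθ
  have hfin : A.Finite := by
    apply Set.Finite.subset (Finset.finite_toSet (M.powerset.image v))
    rintro x ⟨S, hS, rfl, -⟩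
    simp only [Finset.coe_image, Set.mem_image, Finset.mem_coe, Finset.mem_powerset]
    exact ⟨S, by simpa using hS, rfl⟩
  have hmem : sInf A ∈ A := hne.csInf_mem hfin
  obtain ⟨S0, hS0, hvS0, hprop⟩ := hmem
  by_contra hcon
  push_neg at hcon
  exact hTinf (hprop T hT hcon)

theorem stmt9 {ι : Type*} [DecidableEq ι] (M : Finset ι) (v : Finset ι → ℝ) (n : ℕ)
    (hadd : IsAdditive v) (hnn : ∀ S : Finset ι, 0 ≤ v S) (hnd : NonDegenerate M v)
    (hθ : 0 < strongShare M v n)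
    (T : Finset ι) (hT : T ⊆ M) (hTinf : ¬ EEFXFeasible M v n T)
    (hTmax : ∀ T' ⊆ M, ¬ EEFXFeasible M v n T' → v T' ≤ v T)
    (k : ℕ) (hk1 : 1 ≤ k) (hkn : k ≤ n)
    (S : Fin k → Finset ι) (hSsub : ∀ j, S j ⊆ M)
    (hSdisj : ∀ i j : Fin k, i ≠ j → Disjoint (S i) (S j))
    (hSval : ∀ j, v (S j) < strongShare M v n) :
    ∃ Y : Fin k → Finset ι,
      IsPartition (Finset.univ.biUnion S) Y ∧
      T ∩ Finset.univ.biUnion S ⊆ Y ⟨0, hk1⟩ ∧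
      v (Y ⟨0, hk1⟩) < strongShare M v n ∧
      ∀ j : Fin k, j ≠ ⟨0, hk1⟩ → ∀ g ∈ Y j, v (Y j \ {g}) < strongShare M v n := by
  set θ := strongShare M v n with hθdef
  set U := Finset.univ.biUnion S with hU
  have hvT : v T < θ := vT_lt M v n hθ T hT hTinf
  have hUval : v U < (k : ℝ) * θ := by
    have h1 : v U = ∑ j : Fin k, v (S j) := by
      rw [hadd, hU, Finset.sum_biUnion (fun i _ j _ hij => hSdisj i j hij)]
      exact Finset.sum_congr rfl fun j _ => (hadd (S j)).symm
    have h2 : ∑ j : Fin k, v (S j) < ∑ _j : Fin k, θ := by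
      refine Finset.sum_lt_sum_of_nonempty ?_ fun j _ => hSval j
      exact ⟨⟨0, hk1⟩, Finset.mem_univ _⟩
    rw [h1]
    calc ∑ j : Fin k, v (S j) < ∑ _j : Fin k, θ := h2
      _ = (k : ℝ) * θ := by
        rw [Finset.sum_const, Finset.card_univ, Fintype.card_fin, nsmul_eq_mul]
  have hRP : (T ∩ U) ∪ (U \ T) = U := by
    ext x; simp only [Finset.mem_union, Finset.mem_inter, Finset.mem_sdiff]; tauto
  have hdisjRP : Disjoint (T ∩ U) (U \ T) := by
    refine Finset.disjoint_left.mpr fun g hg1 hg2 => ?_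
    exact (Finset.mem_sdiff.mp hg2).2 (Finset.mem_inter.mp hg1).1
  have hvR : v (T ∩ U) < θ :=
    lt_of_le_of_lt (vmono hadd hnn Finset.inter_subset_left) hvT
  have hsum : v (T ∩ U) + v (U \ T) < (k : ℝ) * θ := by
    rw [← vunion hadd hdisjRP, hRP]; exact hUval
  obtain ⟨Y, hpart, h0, h0v, hrest⟩ :=
    key v hadd hnn θ hθ k hk1 (T ∩ U) (U \ T) hdisjRP hvR hsum
  rw [hRP] at hpart
  exact ⟨Y, hpart, h0, h0v, hrest⟩
end

section
/- Let v be an additive non-degenerate valuation with strong EEFX share θ > 0 and T the largest EEFX-infeasible bundle. Let S_1,…,S_k be pairwise disjoint bundles with v(S_j) < θ, S = ∪_j S_j, U = T \ S. If (X_1,…,X_{n−k−1}) is an EFX partition of (M \ S) \ U for v, then v(X_j) ≥ θ for all j ∈ [n−k−1]. -/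
open Finset

theorem stmt10 {ι : Type*} [DecidableEq ι] (M : Finset ι) (v : Finset ι → ℝ) (n : ℕ)
    (hadd : IsAdditive v) (hnn : ∀ S : Finset ι, 0 ≤ v S) (hnd : NonDegenerate M v)
    (hθ : 0 < strongShare M v n)
    (T : Finset ι) (hT : T ⊆ M) (hTinf : ¬ EEFXFeasible M v n T)
    (hTmax : ∀ T' ⊆ M, ¬ EEFXFeasible M v n T' → v T' ≤ v T)
    (k : ℕ) (hk1 : 1 ≤ k) (hkn : k ≤ n)
    (S : Fin k → Finset ι) (hSsub : ∀ j, S j ⊆ M)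
    (hSdisj : ∀ i j : Fin k, i ≠ j → Disjoint (S i) (S j))
    (hSval : ∀ j, v (S j) < strongShare M v n)
    (X : Fin (n - k - 1) → Finset ι)
    (hXpart : IsPartition ((M \ Finset.univ.biUnion S) \ (T \ Finset.univ.biUnion S)) X)
    (hXefx : ∀ j j', ∀ g ∈ X j', v (X j' \ {g}) ≤ v (X j)) :
    ∀ j, strongShare M v n ≤ v (X j) := by
  intro j0
  by_contra hcon
  push_neg at hcon
  have hpos : 0 < n - k - 1 := j0.pos
  -- monotonicity of v
  have hmono : ∀ A B : Finset ι, A ⊆ B → v A ≤ v B := by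
    intro A B hAB
    rw [hadd A, hadd B]
    exact Finset.sum_le_sum_of_subset_of_nonneg hAB (fun i _ _ => hnn {i})
  have hbdd : BddBelow {x | ∃ S ⊆ M, v S = x ∧ ∀ T' ⊆ M, x ≤ v T' → EEFXFeasible M v n T'} := by
    refine ⟨0, ?_⟩
    rintro x ⟨A, hA, rfl, _⟩
    exact hnn A
  -- key lemma: any subset of M with value < θ has value ≤ v T
  have L : ∀ A : Finset ι, A ⊆ M → v A < strongShare M v n → v A ≤ v T := by
    intro A hA hAθ
    by_contra hgt
    push_neg at hgt
    have hmem : v A ∈ {x | ∃ S ⊆ M, v S = x ∧ ∀ T' ⊆ M, x ≤ v T' → EEFXFeasible M v n T'} := by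
      refine ⟨A, hA, rfl, ?_⟩
      intro T' hT' hge
      by_contra hinf
      have := hTmax T' hT' hinf
      linarith
    have h2 : strongShare M v n ≤ v A := by
      unfold strongShare
      exact csInf_le hbdd hmem
    linarith
  -- membership facts for X
  have hXmem : ∀ j, ∀ x ∈ X j, x ∈ M ∧ x ∉ Finset.univ.biUnion S ∧ x ∉ T := by
    intro j x hx
    have hx2 : x ∈ Finset.univ.biUnion X := Finset.mem_biUnion.2 ⟨j, Finset.mem_univ j, hx⟩
    rw [hXpart.2] at hx2
    simp only [Finset.mem_sdiff] at hx2
    refine ⟨hx2.1.1, hx2.1.2, fun hxT => hx2.2 ⟨hxT, hx2.1.2⟩⟩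
  -- construct a partition of M \ T witnessing feasibility of T
  have hdef : ∀ i : Fin (n - 1), ¬ (i : ℕ) < k → (i : ℕ) - k < n - k - 1 := by
    intro i hi
    have := i.isLt
    omega
  set P : Fin (n - 1) → Finset ι :=
    fun i => if h : (i : ℕ) < k then S ⟨i, h⟩ \ T else X ⟨(i : ℕ) - k, hdef i h⟩ with hPdef
  have hPlt : ∀ (i : Fin (n - 1)) (h : (i : ℕ) < k), P i = S ⟨i, h⟩ \ T := fun i h => dif_pos h
  have hPge : ∀ (i : Fin (n - 1)) (h : ¬ (i : ℕ) < k),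
      P i = X ⟨(i : ℕ) - k, hdef i h⟩ := fun i h => dif_neg h
  have hP : EEFXFeasible M v n T := by
    refine ⟨P, ⟨?_, ?_⟩, ?_⟩
    · -- pairwise disjoint
      intro i j hij
      by_cases hi : (i : ℕ) < k <;> by_cases hj : (j : ℕ) < k
      · rw [hPlt i hi, hPlt j hj]
        refine Finset.disjoint_left.2 fun x hxi hxj => ?_
        have hSij : (⟨(i : ℕ), hi⟩ : Fin k) ≠ ⟨(j : ℕ), hj⟩ := by
          intro h
          have := congrArg Fin.val h
          simp only at this
          exact hij (Fin.ext this)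
        exact Finset.disjoint_left.1 (hSdisj _ _ hSij) (Finset.mem_sdiff.1 hxi).1
          (Finset.mem_sdiff.1 hxj).1
      · rw [hPlt i hi, hPge j hj]
        refine Finset.disjoint_left.2 fun x hxi hxj => ?_
        exact (hXmem _ x hxj).2.1 (Finset.mem_biUnion.2 ⟨⟨(i : ℕ), hi⟩, Finset.mem_univ _,
          (Finset.mem_sdiff.1 hxi).1⟩)
      · rw [hPge i hi, hPlt j hj]
        refine Finset.disjoint_left.2 fun x hxi hxj => ?_
        exact (hXmem _ x hxi).2.1 (Finset.mem_biUnion.2 ⟨⟨(j : ℕ), hj⟩, Finset.mem_univ _,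
          (Finset.mem_sdiff.1 hxj).1⟩)
      · rw [hPge i hi, hPge j hj]
        refine hXpart.1 _ _ ?_
        intro h
        have := congrArg Fin.val h
        simp only at this
        have hi' := i.isLt
        have hj' := j.isLt
        exact hij (Fin.ext (by omega))
    · -- union is M \ T
      ext x
      simp only [Finset.mem_biUnion, Finset.mem_univ, true_and, Finset.mem_sdiff]
      constructor
      · rintro ⟨i, hxi⟩
        by_cases hi : (i : ℕ) < k
        · rw [hPlt i hi] at hxi
          have := Finset.mem_sdiff.1 hxi
          exact ⟨hSsub _ this.1, this.2⟩
        · rw [hPge i hi] at hxi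
          have := hXmem _ x hxi
          exact ⟨this.1, this.2.2⟩
      · rintro ⟨hxM, hxT⟩
        by_cases hs : x ∈ Finset.univ.biUnion S
        · obtain ⟨i, _, hxi⟩ := Finset.mem_biUnion.1 hs
          have hik : (i : ℕ) < n - 1 := by have := i.isLt; omega
          refine ⟨⟨(i : ℕ), hik⟩, ?_⟩
          rw [hPlt ⟨(i : ℕ), hik⟩ i.isLt]
          exact Finset.mem_sdiff.2 ⟨by simpa using hxi, hxT⟩
        · have hx2 : x ∈ Finset.univ.biUnion X := by
            rw [hXpart.2]
            simp only [Finset.mem_sdiff]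
            exact ⟨⟨hxM, hs⟩, fun h => hxT h.1⟩
          obtain ⟨j, _, hxj⟩ := Finset.mem_biUnion.1 hx2
          have hjk : (j : ℕ) + k < n - 1 := by have := j.isLt; omega
          refine ⟨⟨(j : ℕ) + k, hjk⟩, ?_⟩
          rw [hPge ⟨(j : ℕ) + k, hjk⟩ (by simp)]
          have heq : ((j : ℕ) + k - k) = (j : ℕ) := by omega
          simpa [heq] using hxj
    · -- feasibility values
      intro j g hg
      by_cases hj : (j : ℕ) < k
      · rw [hPlt j hj] at hg ⊢
        refine L _ (fun x hx =>
          hSsub _ (Finset.mem_sdiff.1 (Finset.mem_sdiff.1 hx).1).1)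
          (lt_of_le_of_lt ?_ (hSval ⟨(j : ℕ), hj⟩))
        exact hmono _ _ (fun x hx => (Finset.mem_sdiff.1 (Finset.mem_sdiff.1 hx).1).1)
      · rw [hPge j hj] at hg ⊢
        exact le_trans (hXefx j0 _ g hg) (L _ (fun x hx => (hXmem _ x hx).1) hcon)
  exact hTinf hP
end

section
/- (Residual self-feasibility of the strong EEFX share, k > 0 case.) Let v be an additive non-degenerate valuation with strong EEFX share θ, and let S_1,…,S_k ⊆ M (1 ≤ k < n) be pairwise disjoint with v(S_j) < θ for all j. Then there exists a partition (X_1,…,X_{n−k}) of M \ (∪_{j∈[k]} S_j) such that v(X_j) ≥ θ for all j ∈ [n−k]. -/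
open Finset

set_option linter.unusedSectionVars false

section AuxProofs

variable {ι : Type*} [DecidableEq ι]

private lemma vEmpty {v : Finset ι → ℝ} (hadd : IsAdditive v) : v ∅ = 0 := by
  simpa using hadd ∅

private lemma vMono {v : Finset ι → ℝ} (hadd : IsAdditive v)
    (hnn : ∀ S : Finset ι, 0 ≤ v S) {A B : Finset ι} (h : A ⊆ B) : v A ≤ v B := by
  rw [hadd A, hadd B]
  exact Finset.sum_le_sum_of_subset_of_nonneg h fun g _ _ => hnn {g}

private lemma vUnion {v : Finset ι → ℝ} (hadd : IsAdditive v) {A B : Finset ι}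
    (h : Disjoint A B) : v (A ∪ B) = v A + v B := by
  rw [hadd (A ∪ B), hadd A, hadd B, Finset.sum_union h]

private lemma vSdiff {v : Finset ι → ℝ} (hadd : IsAdditive v) {A B : Finset ι} (h : A ⊆ B) :
    v (B \ A) = v B - v A := by
  have h1 : v (B \ A ∪ A) = v (B \ A) + v A := vUnion hadd Finset.sdiff_disjoint
  rw [Finset.sdiff_union_of_subset h] at h1
  linarith

private lemma minbig {M : Finset ι} {v : Finset ι → ℝ} (hadd : IsAdditive v)
    (hnn : ∀ S : Finset ι, 0 ≤ v S) (hnd : NonDegenerate M v) {c : ℝ} {pool : Finset ι}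
    (hpool : pool ⊆ M) (hbig : c < v pool) :
    ∃ Z, Z ⊆ pool ∧ c < v Z ∧ ∀ g ∈ Z, v (Z \ {g}) ≤ c := by
  classical
  have hne : (pool.powerset.filter fun Z => c < v Z).Nonempty :=
    ⟨pool, by simp [hbig]⟩
  obtain ⟨Z, hZmem, hZmin⟩ := Finset.exists_min_image _ v hne
  rw [Finset.mem_filter, Finset.mem_powerset] at hZmem
  refine ⟨Z, hZmem.1, hZmem.2, fun g hg => ?_⟩
  by_contra hgt
  push_neg at hgt
  have hmin := hZmin (Z \ {g})
    (by rw [Finset.mem_filter, Finset.mem_powerset]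
        exact ⟨Finset.sdiff_subset.trans hZmem.1, hgt⟩)
  have hgZ : ({g} : Finset ι) ⊆ Z := Finset.singleton_subset_iff.2 hg
  have he : v (Z \ {g}) = v Z - v {g} := vSdiff hadd hgZ
  have hne0 : v {g} ≠ v (∅ : Finset ι) :=
    hnd {g} (hgZ.trans (hZmem.1.trans hpool)) ∅ (Finset.empty_subset M)
      (Finset.singleton_ne_empty g)
  rw [vEmpty hadd] at hne0
  have h1 : (0:ℝ) ≤ v {g} := hnn {g}
  have h2 : (0:ℝ) < v {g} := lt_of_le_of_ne h1 (Ne.symm hne0)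
  linarith

private lemma cons_disjoint {Z : Finset ι} {m : ℕ} {U : Fin m → Finset ι}
    (hZU : ∀ i, Disjoint Z (U i)) (hU : ∀ i j, i ≠ j → Disjoint (U i) (U j)) :
    ∀ i j : Fin (m+1), i ≠ j →
      Disjoint ((Fin.cons Z U : Fin (m+1) → Finset ι) i) ((Fin.cons Z U : Fin (m+1) → Finset ι) j) := by
  intro i j hij
  induction i using Fin.cases with
  | zero =>
    induction j using Fin.cases with
    | zero => exact absurd rfl hij
    | succ j' =>
      rw [Fin.cons_zero, Fin.cons_succ]
      exact hZU j'
  | succ i' =>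
    induction j using Fin.cases with
    | zero =>
      rw [Fin.cons_zero, Fin.cons_succ]
      exact (hZU i').symm
    | succ j' =>
      rw [Fin.cons_succ, Fin.cons_succ]
      exact hU i' j' fun h => hij (congrArg Fin.succ h)

private lemma biUnion_cons {m : ℕ} (Z : Finset ι) (P : Fin m → Finset ι) :
    (Finset.univ.biUnion (Fin.cons Z P : Fin (m+1) → Finset ι)) =
      Z ∪ Finset.univ.biUnion P := by
  ext g
  simp [Finset.mem_biUnion, Fin.exists_fin_succ]

private lemma isPartition_cons {W Z : Finset ι} {m : ℕ} {P : Fin m → Finset ι}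
    (hZ : Z ⊆ W) (hP : IsPartition (W \ Z) P) :
    IsPartition W (Fin.cons Z P) := by
  obtain ⟨hd, hu⟩ := hP
  have hsub : ∀ j, P j ⊆ W \ Z := fun j => by
    rw [← hu]; exact Finset.subset_biUnion_of_mem P (Finset.mem_univ j)
  refine ⟨cons_disjoint (fun j => Finset.disjoint_sdiff.mono_right (hsub j)) hd, ?_⟩
  rw [biUnion_cons, hu, Finset.union_sdiff_of_subset hZ]

private lemma greedy {M : Finset ι} {v : Finset ι → ℝ} (hadd : IsAdditive v)
    (hnn : ∀ S : Finset ι, 0 ≤ v S) (hnd : NonDegenerate M v) {c : ℝ} :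
    ∀ (m : ℕ) (W : Finset ι), W ⊆ M → v W ≤ (m : ℝ) * c →
      ∃ P : Fin m → Finset ι, IsPartition W P ∧ ∀ j, ∀ g ∈ P j, v (P j \ {g}) ≤ c := by
  intro m
  induction m with
  | zero =>
    intro W hWM hW
    have hW0 : W = ∅ := by
      by_contra hne
      refine hnd W hWM ∅ (Finset.empty_subset M) hne ?_
      rw [vEmpty hadd]
      exact le_antisymm (by simpa using hW) (hnn W)
    subst hW0
    refine ⟨Fin.elim0, ⟨fun i => i.elim0, ?_⟩, fun j => j.elim0⟩
    simp
  | succ m ih =>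
    intro W hWM hW
    by_cases hbig : c < v W
    · obtain ⟨Z, hZW, hZbig, hZok⟩ := minbig hadd hnn hnd hWM hbig
      have hrec : v (W \ Z) ≤ (m : ℝ) * c := by
        have := vSdiff hadd hZW
        push_cast at hW ⊢
        linarith
      obtain ⟨P, hPpart, hPok⟩ := ih (W \ Z) (Finset.sdiff_subset.trans hWM) hrec
      refine ⟨Fin.cons Z P, isPartition_cons hZW hPpart, fun j => ?_⟩
      induction j using Fin.cases with
      | zero => simpa using hZok
      | succ j' => simpa using hPok j'
    · push_neg at hbig
      refine ⟨Fin.cons W fun _ => ∅,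
        isPartition_cons (Finset.Subset.refl W) ⟨fun i j _ => by simp, by ext g; simp⟩,
        fun j => ?_⟩
      induction j using Fin.cases with
      | zero =>
        intro g hg
        simp only [Fin.cons_zero] at hg ⊢
        exact le_trans (vMono hadd hnn Finset.sdiff_subset) hbig
      | succ j' => simp

private lemma peel {M : Finset ι} {v : Finset ι → ℝ} (hadd : IsAdditive v)
    (hnn : ∀ S : Finset ι, 0 ≤ v S) (hnd : NonDegenerate M v) {c : ℝ} :
    ∀ (t : ℕ) (pool : Finset ι), pool ⊆ M →
      ∃ (s : ℕ) (U : Fin s → Finset ι), s ≤ t ∧ (∀ i, U i ⊆ pool) ∧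
        (∀ i j, i ≠ j → Disjoint (U i) (U j)) ∧ (∀ i, c < v (U i)) ∧
        (∀ i, ∀ g ∈ U i, v (U i \ {g}) ≤ c) ∧
        (s = t ∨ v (pool \ Finset.univ.biUnion U) ≤ c) := by
  intro t
  induction t with
  | zero =>
    intro pool hpool
    exact ⟨0, Fin.elim0, le_refl 0, fun i => i.elim0, fun i => i.elim0, fun i => i.elim0,
      fun i => i.elim0, Or.inl rfl⟩
  | succ t ih =>
    intro pool hpool
    by_cases hbig : c < v pool
    · obtain ⟨Z, hZ, hZbig, hZok⟩ := minbig hadd hnn hnd hpool hbig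
      obtain ⟨s, U, hst, hUsub, hUdisj, hUbig, hUok, hlast⟩ :=
        ih (pool \ Z) (Finset.sdiff_subset.trans hpool)
      refine ⟨s+1, Fin.cons Z U, by omega, ?_, ?_, ?_, ?_, ?_⟩
      · intro i
        induction i using Fin.cases with
        | zero => simpa using hZ
        | succ i' => simpa using (hUsub i').trans Finset.sdiff_subset
      · exact cons_disjoint (fun i => Finset.disjoint_sdiff.mono_right (hUsub i)) hUdisj
      · intro i
        induction i using Fin.cases with
        | zero => simpa using hZbig
        | succ i' => simpa using hUbig i'
      · intro i
        induction i using Fin.cases with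
        | zero => simpa using hZok
        | succ i' => simpa using hUok i'
      · rcases hlast with h | h
        · exact Or.inl (by omega)
        · refine Or.inr ?_
          rw [biUnion_cons]
          have heq : pool \ (Z ∪ Finset.univ.biUnion U)
              = (pool \ Z) \ Finset.univ.biUnion U := by
            ext g
            simp only [Finset.mem_sdiff, Finset.mem_union]
            tauto
          rw [heq]
          exact h
    · push_neg at hbig
      refine ⟨0, Fin.elim0, Nat.zero_le _, fun i => i.elim0, fun i => i.elim0, fun i => i.elim0,
        fun i => i.elim0, Or.inr ?_⟩
      have : Finset.univ.biUnion (Fin.elim0 : Fin 0 → Finset ι) = ∅ := by simp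
      rw [this, Finset.sdiff_empty]
      exact hbig

end AuxProofs

theorem stmt11 {ι : Type*} [DecidableEq ι] (M : Finset ι) (v : Finset ι → ℝ) (n : ℕ)
    (hadd : IsAdditive v) (hnn : ∀ S : Finset ι, 0 ≤ v S) (hnd : NonDegenerate M v)
    (k : ℕ) (hk1 : 1 ≤ k) (hkn : k < n)
    (S : Fin k → Finset ι) (hSsub : ∀ j, S j ⊆ M)
    (hSdisj : ∀ i j : Fin k, i ≠ j → Disjoint (S i) (S j))
    (hSval : ∀ j, v (S j) < strongShare M v n) :
    ∃ X : Fin (n - k) → Finset ι,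
      IsPartition (M \ Finset.univ.biUnion S) X ∧
      ∀ j, strongShare M v n ≤ v (X j) := by
  classical
  have hvempty : v (∅ : Finset ι) = 0 := vEmpty hadd
  set θ := strongShare M v n with hθdef
  set A := {x : ℝ | ∃ S ⊆ M, v S = x ∧ ∀ T ⊆ M, x ≤ v T → EEFXFeasible M v n T} with hA
  have hθeq : θ = sInf A := by rw [hθdef, hA]; rfl
  have hbdd : BddBelow A := by
    refine ⟨0, fun x hx => ?_⟩
    rw [hA] at hx
    obtain ⟨S', -, hv, -⟩ := hx
    rw [← hv]; exact hnn S'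
  have hMfeas : EEFXFeasible M v n M := by
    refine ⟨fun _ => ∅, ⟨fun i j _ => by simp, ?_⟩, by simp⟩
    ext g; simp
  by_cases hall : ∀ T ⊆ M, EEFXFeasible M v n T
  · exfalso
    have h0A : (0:ℝ) ∈ A := by
      rw [hA]
      exact ⟨∅, Finset.empty_subset M, hvempty, fun T hT _ => hall T hT⟩
    have h1 : θ ≤ 0 := by rw [hθeq]; exact csInf_le hbdd h0A
    have h2 := hnn (S ⟨0, hk1⟩)
    have h3 := hSval ⟨0, hk1⟩
    linarith
  · push_neg at hall
    obtain ⟨T0, hT0M, hT0⟩ := hall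
    have hfne : (M.powerset.filter fun T => ¬ EEFXFeasible M v n T).Nonempty :=
      ⟨T0, by simp [hT0M, hT0]⟩
    obtain ⟨B, hBmem, hBmax⟩ := Finset.exists_max_image _ v hfne
    rw [Finset.mem_filter, Finset.mem_powerset] at hBmem
    obtain ⟨hBM, hBinf⟩ := hBmem
    have hβ0 : (0:ℝ) ≤ v B := hnn B
    have hmaxinf : ∀ T ⊆ M, ¬ EEFXFeasible M v n T → v T ≤ v B := fun T hT hnf =>
      hBmax T (by rw [Finset.mem_filter, Finset.mem_powerset]; exact ⟨hT, hnf⟩)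
    have hAfin : A.Finite := by
      refine Set.Finite.subset (M.powerset.image v).finite_toSet fun x hx => ?_
      rw [hA] at hx
      obtain ⟨S', hS', hv, -⟩ := hx
      exact Finset.mem_coe.2 (hv ▸ Finset.mem_image_of_mem v (Finset.mem_powerset.2 hS'))
    have hAne : A.Nonempty := by
      refine ⟨v M, ?_⟩
      rw [hA]
      refine ⟨M, Finset.Subset.refl M, rfl, fun T hT hle => ?_⟩
      have h1 : v T ≤ v M := vMono hadd hnn hT
      have h2 : T = M := by
        by_contra hne
        exact hnd T hT M (Finset.Subset.refl M) hne (le_antisymm h1 hle)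
      rw [h2]; exact hMfeas
    have hθmem : θ ∈ A := by rw [hθeq]; exact hAne.csInf_mem hAfin
    rw [hA] at hθmem
    obtain ⟨Sstar, hSstarM, hSstarv, hSstarprop⟩ := hθmem
    have hF1 : v B < θ := by
      by_contra hle
      push_neg at hle
      exact hBinf (hSstarprop B hBM hle)
    have hF2 : ∀ X ⊆ M, v B < v X → θ ≤ v X := by
      intro X hXM hXbig
      rw [hθeq]
      refine csInf_le hbdd ?_
      rw [hA]
      refine ⟨X, hXM, rfl, fun T hT hle => ?_⟩
      by_contra hnf
      exact absurd (hmaxinf T hT hnf) (not_le.2 (lt_of_lt_of_le hXbig hle))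
    have hF3 : ∀ j, v (S j) ≤ v B := by
      intro j
      by_contra hgt
      push_neg at hgt
      exact absurd (hF2 (S j) (hSsub j) hgt) (not_le.2 (hSval j))
    have hUSM : Finset.univ.biUnion S ⊆ M := Finset.biUnion_subset.2 fun j _ => hSsub j
    set R := M \ Finset.univ.biUnion S with hR
    have hRM : R ⊆ M := Finset.sdiff_subset
    have hRBM : R \ B ⊆ M := Finset.sdiff_subset.trans hRM
    obtain ⟨s, U, hst, hUsub, hUdisj, hUbig, hUok, hlast⟩ :=
      peel (c := v B) hadd hnn hnd (n - k - 1) (R \ B) hRBM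
    set UU := Finset.univ.biUnion U with hUU
    have hUUsub : UU ⊆ R \ B := Finset.biUnion_subset.2 fun i _ => hUsub i
    have hUUR : UU ⊆ R := hUUsub.trans Finset.sdiff_subset
    have hUUMB : UU ⊆ M \ B :=
      hUUsub.trans (Finset.sdiff_subset_sdiff hRM (Finset.Subset.refl B))
    set L0 := R \ UU with hL0
    have hL0R : L0 ⊆ R := Finset.sdiff_subset
    by_cases hgoal : v B < v L0 ∧ s = n - k - 1
    · -- GOAL branch
      obtain ⟨hLbig, hseq⟩ := hgoal
      refine ⟨fun i => if h : (i : ℕ) < s then U ⟨i, h⟩ else L0, ⟨?_, ?_⟩, ?_⟩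
      · intro i j hij
        dsimp only
        by_cases hi : (i:ℕ) < s
        · by_cases hj : (j:ℕ) < s
          · rw [dif_pos hi, dif_pos hj]
            exact hUdisj _ _ fun h => hij (Fin.val_injective (Fin.mk_eq_mk.1 h))
          · rw [dif_pos hi, dif_neg hj]
            exact Finset.disjoint_sdiff.mono_left
              (Finset.subset_biUnion_of_mem U (Finset.mem_univ _))
        · by_cases hj : (j:ℕ) < s
          · rw [dif_neg hi, dif_pos hj]
            exact (Finset.disjoint_sdiff.mono_left
              (Finset.subset_biUnion_of_mem U (Finset.mem_univ _))).symm
          · exfalso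
            have hi' := i.isLt
            have hj' := j.isLt
            exact hij (Fin.val_injective (by omega))
      · ext g
        simp only [Finset.mem_biUnion, Finset.mem_univ, true_and]
        constructor
        · rintro ⟨i, hgi⟩
          try dsimp only at hgi
          by_cases hi : (i:ℕ) < s
          · rw [dif_pos hi] at hgi
            exact hUUR (Finset.mem_biUnion.2 ⟨⟨(i:ℕ), hi⟩, Finset.mem_univ _, hgi⟩)
          · rw [dif_neg hi] at hgi
            exact hL0R hgi
        · intro hgR
          by_cases hgU : g ∈ UU
          · obtain ⟨i0, -, hgi0⟩ := Finset.mem_biUnion.1 hgU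
            have hlt : (i0 : ℕ) < n - k := by have := i0.isLt; omega
            refine ⟨⟨(i0:ℕ), hlt⟩, ?_⟩
            try dsimp only
            rw [dif_pos (show ((⟨(i0:ℕ), hlt⟩ : Fin (n-k)) : ℕ) < s from i0.isLt)]
            exact hgi0
          · have hlt : n - k - 1 < n - k := by omega
            refine ⟨⟨n - k - 1, hlt⟩, ?_⟩
            try dsimp only
            rw [dif_neg (show ¬ (n - k - 1) < s by omega)]
            exact Finset.mem_sdiff.2 ⟨hgR, hgU⟩
      · intro j
        dsimp only
        by_cases hj : (j:ℕ) < s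
        · rw [dif_pos hj]
          exact hF2 _ ((hUsub _).trans hRBM) (hUbig _)
        · rw [dif_neg hj]
          exact hF2 _ (hL0R.trans hRM) hLbig
    · -- CONTRADICTION branch
      exfalso
      set W := (M \ B) \ UU with hW
      have hWM : W ⊆ M := Finset.sdiff_subset.trans Finset.sdiff_subset
      have hvW : v W = v (Finset.univ.biUnion S) + v L0 - v B := by
        have e1 : v W = v (M \ B) - v UU := vSdiff hadd hUUMB
        have e2 : v (M \ B) = v M - v B := vSdiff hadd hBM
        have e3 : v L0 = v R - v UU := vSdiff hadd hUUR
        have e4 : v R = v M - v (Finset.univ.biUnion S) := vSdiff hadd hUSM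
        linarith
      have hSsum : v (Finset.univ.biUnion S) ≤ (k:ℝ) * v B := by
        have e : v (Finset.univ.biUnion S) = ∑ j : Fin k, v (S j) := by
          rw [hadd (Finset.univ.biUnion S),
            Finset.sum_biUnion (fun x _ y _ hxy => hSdisj x y hxy)]
          exact Finset.sum_congr rfl fun j _ => (hadd (S j)).symm
        rw [e]
        calc ∑ j : Fin k, v (S j) ≤ ∑ _j : Fin k, v B :=
              Finset.sum_le_sum fun j _ => hF3 j
          _ = (k:ℝ) * v B := by
              rw [Finset.sum_const, Finset.card_univ, Fintype.card_fin, nsmul_eq_mul]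
      have hcast : ∀ a b : ℕ, a ≤ b → (a:ℝ) * v B ≤ (b:ℝ) * v B := fun a b hab =>
        mul_le_mul_of_nonneg_right (by exact_mod_cast hab) hβ0
      have hbudget : v W ≤ ((n - 1 - s : ℕ) : ℝ) * v B := by
        rcases not_and_or.1 hgoal with hsmall | hsne
        · push_neg at hsmall
          have h1 : v W ≤ (k:ℝ) * v B := by linarith
          exact h1.trans (hcast k (n-1-s) (by omega))
        · have hsm : v ((R \ B) \ UU) ≤ v B := hlast.resolve_left hsne
          have h3 : L0 \ B = (R \ B) \ UU := by
            rw [hL0]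
            ext g
            simp only [Finset.mem_sdiff]
            tauto
          have h1 : L0 \ B ∪ L0 ∩ B = L0 := Finset.sdiff_union_inter L0 B
          have h2 : v (L0 \ B ∪ L0 ∩ B) = v (L0 \ B) + v (L0 ∩ B) :=
            vUnion hadd (Finset.disjoint_sdiff_inter L0 B)
          have h4 : v (L0 ∩ B) ≤ v B := vMono hadd hnn Finset.inter_subset_right
          have h5 : v L0 ≤ 2 * v B := by
            have e : v L0 = v (L0 \ B) + v (L0 ∩ B) := by rw [← h2, h1]
            rw [h3] at e
            linarith
          have h6 : v W ≤ ((k:ℝ) + 1) * v B := by nlinarith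
          have h7 := hcast (k+1) (n-1-s) (by omega)
          push_cast at h7
          linarith
      obtain ⟨Q, hQpart, hQok⟩ :=
        greedy (c := v B) hadd hnn hnd (n - 1 - s) W hWM hbudget
      obtain ⟨hQdisj, hQun⟩ := hQpart
      have hQsubW : ∀ j, Q j ⊆ W := fun j => by
        rw [← hQun]; exact Finset.subset_biUnion_of_mem Q (Finset.mem_univ j)
      refine hBinf ⟨fun i => if h : (i:ℕ) < s then U ⟨(i:ℕ), h⟩
        else Q ⟨(i:ℕ) - s, by have := i.isLt; omega⟩, ⟨?_, ?_⟩, ?_⟩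
      · intro i j hij
        dsimp only
        by_cases hi : (i:ℕ) < s
        · by_cases hj : (j:ℕ) < s
          · rw [dif_pos hi, dif_pos hj]
            exact hUdisj _ _ fun h => hij (Fin.val_injective (Fin.mk_eq_mk.1 h))
          · rw [dif_pos hi, dif_neg hj]
            refine Finset.disjoint_left.2 fun g hgU hgQ => ?_
            have h1 : g ∈ UU := Finset.mem_biUnion.2 ⟨_, Finset.mem_univ _, hgU⟩
            have h2 : g ∈ W := hQsubW _ hgQ
            exact (Finset.mem_sdiff.1 h2).2 h1
        · by_cases hj : (j:ℕ) < s
          · rw [dif_neg hi, dif_pos hj]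
            refine Finset.disjoint_right.2 fun g hgU hgQ => ?_
            have h1 : g ∈ UU := Finset.mem_biUnion.2 ⟨_, Finset.mem_univ _, hgU⟩
            have h2 : g ∈ W := hQsubW _ hgQ
            exact (Finset.mem_sdiff.1 h2).2 h1
          · rw [dif_neg hi, dif_neg hj]
            refine hQdisj _ _ fun h => hij (Fin.val_injective ?_)
            have h' := congrArg Fin.val h
            simp only at h'
            have hi' := i.isLt
            have hj' := j.isLt
            omega
      · ext g
        simp only [Finset.mem_biUnion, Finset.mem_univ, true_and]
        constructor
        · rintro ⟨i, hgi⟩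
          try dsimp only at hgi
          by_cases hi : (i:ℕ) < s
          · rw [dif_pos hi] at hgi
            exact hUUMB (Finset.mem_biUnion.2 ⟨_, Finset.mem_univ _, hgi⟩)
          · rw [dif_neg hi] at hgi
            exact Finset.sdiff_subset (hQsubW _ hgi)
        · intro hgMB
          by_cases hgU : g ∈ UU
          · obtain ⟨i0, -, hgi0⟩ := Finset.mem_biUnion.1 hgU
            have hlt : (i0:ℕ) < n - 1 := by have := i0.isLt; omega
            refine ⟨⟨(i0:ℕ), hlt⟩, ?_⟩
            try dsimp only
            rw [dif_pos (show ((⟨(i0:ℕ), hlt⟩ : Fin (n-1)) : ℕ) < s from i0.isLt)]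
            exact hgi0
          · have hgW : g ∈ W := Finset.mem_sdiff.2 ⟨hgMB, hgU⟩
            rw [← hQun] at hgW
            obtain ⟨j0, -, hgj0⟩ := Finset.mem_biUnion.1 hgW
            have hlt : s + (j0:ℕ) < n - 1 := by have := j0.isLt; omega
            refine ⟨⟨s + (j0:ℕ), hlt⟩, ?_⟩
            try dsimp only
            rw [dif_neg (show ¬ (s + (j0:ℕ)) < s by omega)]
            convert hgj0 using 2
            exact Fin.ext (by simp)
      · intro j
        dsimp only
        by_cases hj : (j:ℕ) < s
        · rw [dif_pos hj]
          exact hUok _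
        · rw [dif_neg hj]
          exact hQok _
end

section
/- If for all non-degenerate additive instances there exists an allocation that is both EF1 and EEFX, then for all additive instances (possibly degenerate) such an allocation exists. (Perturbation argument: adding value ε^j to item g_j with Σ_j ε^j < 1 for integer-valued valuations preserves strict value comparisons and makes the instance non-degenerate.) -/
open Finset

def EF1Alloc {ι : Type*} [DecidableEq ι] {n : ℕ} (v : Fin n → Finset ι → ℝ)
    (X : Fin n → Finset ι) : Prop :=
  ∀ i j : Fin n, v i (X j) ≤ v i (X i) ∨ ∃ g ∈ X j, v i (X j \ {g}) ≤ v i (X i)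

def EEFXAlloc {ι : Type*} [DecidableEq ι] (M : Finset ι) {n : ℕ}
    (v : Fin n → Finset ι → ℝ) (X : Fin n → Finset ι) : Prop :=
  ∀ i : Fin n, EEFXFeasible M (v i) n (X i)


private lemma aux_sum_range_two_pow_lt (m : ℕ) : ∑ k ∈ Finset.range m, 2 ^ k < 2 ^ m := by
  induction m with
  | zero => simp
  | succ m ih => rw [Finset.sum_range_succ, pow_succ]; omega

private lemma aux_sum_two_pow_lt {A B : Finset ℕ} {m : ℕ} (hm : m ∈ A)
    (hB : ∀ k ∈ B, k < m) : ∑ k ∈ B, 2 ^ k < ∑ k ∈ A, 2 ^ k := by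
  calc ∑ k ∈ B, 2 ^ k ≤ ∑ k ∈ Finset.range m, 2 ^ k :=
        Finset.sum_le_sum_of_subset (fun k hk => Finset.mem_range.2 (hB k hk))
    _ < 2 ^ m := aux_sum_range_two_pow_lt m
    _ ≤ ∑ k ∈ A, 2 ^ k := Finset.single_le_sum (fun _ _ => Nat.zero_le _) hm

private lemma aux_sum_two_pow_injective {A B : Finset ℕ}
    (h : ∑ k ∈ A, 2 ^ k = ∑ k ∈ B, 2 ^ k) : A = B := by
  by_contra hne
  have h' : ∑ k ∈ A \ B, 2 ^ k = ∑ k ∈ B \ A, 2 ^ k := by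
    have hA := Finset.sum_inter_add_sum_sdiff A B (fun k => 2 ^ k)
    have hB := Finset.sum_inter_add_sum_sdiff B A (fun k => 2 ^ k)
    rw [Finset.inter_comm] at hB
    omega
  have hC : ((A \ B) ∪ (B \ A)).Nonempty := by
    rw [Finset.nonempty_iff_ne_empty]
    intro h0
    rw [Finset.union_eq_empty, Finset.sdiff_eq_empty_iff_subset,
      Finset.sdiff_eq_empty_iff_subset] at h0
    exact hne (Finset.Subset.antisymm h0.1 h0.2)
  set m := ((A \ B) ∪ (B \ A)).max' hC with hmdef
  have hmmem := Finset.max'_mem ((A \ B) ∪ (B \ A)) hC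
  rcases Finset.mem_union.1 hmmem with hm | hm
  · have hlt : ∀ k ∈ B \ A, k < m := by
      intro k hk
      have hle : k ≤ m := Finset.le_max' _ _ (Finset.mem_union_right _ hk)
      rcases lt_or_eq_of_le hle with h1 | h1
      · exact h1
      · exfalso; rw [h1] at hk
        exact (Finset.mem_sdiff.1 hk).2 (Finset.mem_sdiff.1 hm).1
    exact absurd h'.symm (Nat.ne_of_lt (aux_sum_two_pow_lt hm hlt))
  · have hlt : ∀ k ∈ A \ B, k < m := by
      intro k hk
      have hle : k ≤ m := Finset.le_max' _ _ (Finset.mem_union_left _ hk)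
      rcases lt_or_eq_of_le hle with h1 | h1
      · exact h1
      · exfalso; rw [h1] at hk
        exact (Finset.mem_sdiff.1 hk).2 (Finset.mem_sdiff.1 hm).1
    exact absurd h' (Nat.ne_of_lt (aux_sum_two_pow_lt hm hlt))

theorem stmt13 {ι : Type*} [DecidableEq ι] (M : Finset ι) (n : ℕ)
    (H : ∀ v : Fin n → Finset ι → ℝ,
      (∀ i, IsAdditive (v i)) → (∀ i (S : Finset ι), 0 ≤ v i S) →
      (∀ i, NonDegenerate M (v i)) →
      ∃ X : Fin n → Finset ι, IsPartition M X ∧ EF1Alloc v X ∧ EEFXAlloc M v X) :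
    ∀ v : Fin n → Finset ι → ℝ,
      (∀ i, IsAdditive (v i)) → (∀ i (S : Finset ι), 0 ≤ v i S) →
      ∃ X : Fin n → Finset ι, IsPartition M X ∧ EF1Alloc v X ∧ EEFXAlloc M v X := by
  intro v hadd hnn
  classical
  -- an injective index on M
  let idx : ι → ℕ := fun g => if h : g ∈ M then (M.equivFin ⟨g, h⟩ : Fin M.card) else 0
  have hidx : ∀ g ∈ M, ∀ g' ∈ M, idx g = idx g' → g = g' := by
    intro g hg g' hg' h
    simp only [idx, dif_pos hg, dif_pos hg'] at h
    have h2 : M.equivFin ⟨g, hg⟩ = M.equivFin ⟨g', hg'⟩ := Fin.ext h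
    have := M.equivFin.injective h2
    exact congrArg Subtype.val this
  -- the perturbation weight
  let u : Finset ι → ℝ := fun S => ∑ g ∈ S, (2 : ℝ) ^ (idx g)
  have hu_nonneg : ∀ S, 0 ≤ u S := fun S => Finset.sum_nonneg fun g _ => by positivity
  have hu_mono : ∀ S ⊆ M, u S ≤ u M := fun S hS =>
    Finset.sum_le_sum_of_subset_of_nonneg hS (fun g _ _ => by positivity)
  have hu_inj : ∀ S ⊆ M, ∀ T ⊆ M, u S = u T → S = T := by
    intro S hS T hT h
    have hnat : (∑ g ∈ S, 2 ^ (idx g) : ℕ) = ∑ g ∈ T, 2 ^ (idx g) := by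
      have : ((∑ g ∈ S, 2 ^ (idx g) : ℕ) : ℝ) = ((∑ g ∈ T, 2 ^ (idx g) : ℕ) : ℝ) := by
        push_cast; exact h
      exact_mod_cast this
    have hSim : ∑ g ∈ S, 2 ^ (idx g) = ∑ k ∈ S.image idx, 2 ^ k :=
      (Finset.sum_image (fun x hx y hy hxy => hidx x (hS hx) y (hS hy) hxy)).symm
    have hTim : ∑ g ∈ T, 2 ^ (idx g) = ∑ k ∈ T.image idx, 2 ^ k :=
      (Finset.sum_image (fun x hx y hy hxy => hidx x (hT hx) y (hT hy) hxy)).symm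
    have himg : S.image idx = T.image idx := by
      apply aux_sum_two_pow_injective
      rw [← hSim, ← hTim]; exact hnat
    ext g
    constructor
    · intro hg
      have : idx g ∈ T.image idx := himg ▸ Finset.mem_image_of_mem idx hg
      obtain ⟨g', hg', hgg'⟩ := Finset.mem_image.1 this
      rwa [hidx g' (hT hg') g (hS hg) hgg'] at hg'
    · intro hg
      have : idx g ∈ S.image idx := himg ▸ Finset.mem_image_of_mem idx hg
      obtain ⟨g', hg', hgg'⟩ := Finset.mem_image.1 this
      rwa [hidx g' (hS hg') g (hT hg) hgg'] at hg'
  -- the minimum gap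
  let D : Finset ℝ := (((Finset.univ : Finset (Fin n)) ×ˢ M.powerset ×ˢ M.powerset).image
    (fun p => |v p.1 p.2.1 - v p.1 p.2.2|)).filter (fun x => 0 < x)
  let δ : ℝ := if h : D.Nonempty then D.min' h else 1
  have hδpos : 0 < δ := by
    by_cases h : D.Nonempty
    · have := (Finset.mem_filter.1 (D.min'_mem h)).2
      simpa [δ, dif_pos h] using this
    · simp [δ, dif_neg h]
  have hδle : ∀ i, ∀ S ⊆ M, ∀ T ⊆ M, v i S ≠ v i T → δ ≤ |v i S - v i T| := by
    intro i S hS T hT hne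
    have hmem : |v i S - v i T| ∈ D := by
      refine Finset.mem_filter.2 ⟨Finset.mem_image.2 ⟨(i, S, T), ?_, rfl⟩,
        abs_pos.2 (sub_ne_zero.2 hne)⟩
      simp [Finset.mem_product, Finset.mem_powerset, hS, hT]
    have hD : D.Nonempty := ⟨_, hmem⟩
    simpa [δ, dif_pos hD] using Finset.min'_le D _ hmem
  -- choose θ
  have hηpos : 0 < δ / (u M + 1) := div_pos hδpos (by linarith [hu_nonneg M])
  let B : Finset ℝ := ((Finset.univ : Finset (Fin n)) ×ˢ M.powerset ×ˢ M.powerset).image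
    (fun p => (v p.1 p.2.1 - v p.1 p.2.2) / (u p.2.2 - u p.2.1))
  obtain ⟨θ, hθIoo, hθB⟩ : ∃ θ, θ ∈ Set.Ioo (0 : ℝ) (δ / (u M + 1)) ∧ θ ∉ (B : Set ℝ) := by
    have hinf : (Set.Ioo (0 : ℝ) (δ / (u M + 1))).Infinite := Set.Ioo_infinite hηpos
    obtain ⟨θ, hθ1, hθ2⟩ := (hinf.diff B.finite_toSet).nonempty
    exact ⟨θ, hθ1, hθ2⟩
  have hθpos : 0 < θ := hθIoo.1
  -- perturbed valuations
  let w : Fin n → Finset ι → ℝ := fun i S => ∑ g ∈ S, (v i {g} + θ * (2 : ℝ) ^ (idx g))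
  have hw : ∀ i S, w i S = v i S + θ * u S := by
    intro i S
    show ∑ g ∈ S, (v i {g} + θ * (2 : ℝ) ^ (idx g)) = _
    rw [Finset.sum_add_distrib, ← Finset.mul_sum, ← hadd i S]
  -- key transfer lemma
  have hkey : ∀ i, ∀ S ⊆ M, ∀ T ⊆ M, w i S ≤ w i T → v i S ≤ v i T := by
    intro i S hS T hT hle
    by_contra hlt
    push_neg at hlt
    have hne : v i S ≠ v i T := ne_of_gt hlt
    have h1 : δ ≤ v i S - v i T := by
      have := hδle i S hS T hT hne
      rwa [abs_of_pos (sub_pos.2 hlt)] at this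
    have h2 : u T - u S ≤ u M := by
      have := hu_mono T hT
      have := hu_nonneg S
      linarith
    have h3 : θ * (u T - u S) ≤ θ * u M := mul_le_mul_of_nonneg_left h2 hθpos.le
    have h4 : θ * (u M + 1) < δ := by
      rw [← lt_div_iff₀ (by linarith [hu_nonneg M] : (0:ℝ) < u M + 1)]
      exact hθIoo.2
    have h5 : θ * u M < δ := by nlinarith [hθpos]
    rw [hw i S, hw i T] at hle
    nlinarith
  -- w is non-degenerate
  have hwnd : ∀ i, NonDegenerate M (w i) := by
    intro i S hS T hT hne heq
    rw [hw i S, hw i T] at heq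
    have huST : u T - u S ≠ 0 := by
      intro h
      exact hne (hu_inj S hS T hT (by linarith [sub_eq_zero.1 h]))
    have hθeq : θ = (v i S - v i T) / (u T - u S) := by
      rw [eq_div_iff huST]; linarith
    apply hθB
    rw [hθeq]
    refine Finset.mem_coe.2 (Finset.mem_image.2 ⟨(i, S, T), ?_, rfl⟩)
    simp [Finset.mem_product, Finset.mem_powerset, hS, hT]
  -- apply H
  obtain ⟨X, hX, hEF1, hEEFX⟩ := H w
    (fun i S => by
      show ∑ g ∈ S, (v i {g} + θ * (2 : ℝ) ^ (idx g)) = ∑ g ∈ S, w i {g}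
      refine Finset.sum_congr rfl fun g _ => ?_
      show _ = ∑ x ∈ ({g} : Finset ι), (v i {x} + θ * (2 : ℝ) ^ (idx x))
      rw [Finset.sum_singleton])
    (fun i S => Finset.sum_nonneg fun g _ =>
      add_nonneg (hnn i {g}) (mul_nonneg hθpos.le (by positivity)))
    hwnd
  have hXM : ∀ j, X j ⊆ M := fun j =>
    hX.2 ▸ Finset.subset_biUnion_of_mem X (Finset.mem_univ j)
  refine ⟨X, hX, ?_, ?_⟩
  · intro i j
    rcases hEF1 i j with h | ⟨g, hg, h⟩
    · exact Or.inl (hkey i _ (hXM j) _ (hXM i) h)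
    · exact Or.inr ⟨g, hg, hkey i _ (Finset.sdiff_subset.trans (hXM j)) _ (hXM i) h⟩
  · intro i
    obtain ⟨P, hP, hPle⟩ := hEEFX i
    refine ⟨P, hP, fun j g hg => ?_⟩
    have hPj : P j ⊆ M :=
      (hP.2 ▸ Finset.subset_biUnion_of_mem P (Finset.mem_univ j)).trans Finset.sdiff_subset
    exact hkey i _ (Finset.sdiff_subset.trans hPj) _ (hXM i) (hPle j g hg)
end
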